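/- Remainder estimate in the fine-mesh regime: define the Taylor remainder R_q(x₁, x₂; f) = (1/q!) ∫_{x₁}^{x₂} (x₂ − x)^q f^{(q+1)}(x) dx. Let b > 0 and c₂ > 0. Then there exists C > 0, depending only on b and c₂, such that for all d ∈ (0,1], all h with 0 < h ≤ d, all x ∈ [h, 1−h], and every function z ∈ C⁴([0,1]) with |z^{(4)}(t)| ≤ c₂ (1 + d⁻³ exp(−b d⁻¹ (1 − t))) on [0,1], one has, with P = b h / d and B(z) = z/(e^z − 1): d h⁻² B(−P) |R₃(x, x − h; z)| + d h⁻² B(P) |R₃(x, x + h; z)| ≤ C h² ( 1 + d⁻² exp(−b d⁻¹ (1 − x)) ). -/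

import Mathlib

/-- Bernoulli function `B(z) = z / (e^z − 1)`. -/
noncomputable def Bern (z : ℝ) : ℝ := z / (Real.exp z - 1)

/-- Taylor remainder `R_q(x₁, x₂; f) = (1/q!) ∫_{x₁}^{x₂} (x₂ − x)^q f^{(q+1)}(x) dx`. -/
noncomputable def taylorR (q : ℕ) (x₁ x₂ : ℝ) (f : ℝ → ℝ) : ℝ :=
  (1 / (Nat.factorial q : ℝ)) * ∫ x in x₁..x₂, (x₂ - x) ^ q * iteratedDeriv (q + 1) f x

/-!
Proof idea. Since `h ≤ d`, the layer weight `exp(−b d⁻¹ (1 − t))` changes by at most the factor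
`e^b` on `[x − h, x + h]`, so `|z⁽⁴⁾| ≤ M := c₂ (1 + e^b d⁻³ exp(−b d⁻¹ (1 − x)))` there and both
remainders are at most `M h⁴ / 3!`. With `P = b h / d ≤ b` the Bernoulli weights satisfy
`B(−P) + B(P) = P + 2 B(P) ≤ b + 2`, and `d M ≤ c₂ e^b (1 + d⁻² exp(−b d⁻¹ (1 − x)))` as `d ≤ 1`.
-/

open Real Set

theorem Bern_nonneg (z : ℝ) : 0 ≤ Bern z := by
  rcases le_total 0 z with hz | hz
  · exact div_nonneg hz (sub_nonneg.mpr (one_le_exp hz))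
  · exact div_nonneg_of_nonpos hz (sub_nonpos.mpr (exp_le_one_iff.mpr hz))

theorem Bern_le_one {z : ℝ} (hz : 0 ≤ z) : Bern z ≤ 1 :=
  div_le_one_of_le₀ (by linarith [add_one_le_exp z]) (sub_nonneg.mpr (one_le_exp hz))

theorem Bern_neg (z : ℝ) : Bern (-z) = z + Bern z := by
  rcases eq_or_ne z 0 with rfl | hz
  · simp [Bern]
  have hne : exp z - 1 ≠ 0 := sub_ne_zero.mpr (by simpa using hz)
  have hne' : 1 - exp z ≠ 0 := fun h => hne (by linarith)
  rw [Bern, Bern, exp_neg]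
  field_simp
  ring

theorem Bern_neg_add_Bern_le {z : ℝ} (hz : 0 ≤ z) : Bern (-z) + Bern z ≤ z + 2 := by
  linarith [Bern_neg z, Bern_le_one hz]

theorem Bern_neg_mul_add_Bern_mul_le {P u v r : ℝ} (hP : 0 ≤ P) (hu : |u| ≤ r) (hv : |v| ≤ r) :
    Bern (-P) * |u| + Bern P * |v| ≤ (P + 2) * r := by
  have hr : 0 ≤ r := (abs_nonneg u).trans hu
  calc Bern (-P) * |u| + Bern P * |v| ≤ Bern (-P) * r + Bern P * r := by
        gcongr <;> exact Bern_nonneg _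
    _ = (Bern (-P) + Bern P) * r := by ring
    _ ≤ (P + 2) * r := by gcongr ?_ * _; exact Bern_neg_add_Bern_le hP

theorem abs_taylorR_le {q : ℕ} {x₁ x₂ M : ℝ} {f : ℝ → ℝ}
    (hM : ∀ t ∈ uIcc x₁ x₂, |iteratedDeriv (q + 1) f t| ≤ M) :
    |taylorR q x₁ x₂ f| ≤ M * |x₂ - x₁| ^ (q + 1) / q.factorial := by
  have hintegrand : ∀ t ∈ uIoc x₁ x₂,
      ‖(x₂ - t) ^ q * iteratedDeriv (q + 1) f t‖ ≤ |x₂ - x₁| ^ q * M := by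
    intro t ht
    have ht' := uIoc_subset_uIcc ht
    rw [Real.norm_eq_abs, abs_mul, abs_pow]
    exact mul_le_mul (pow_le_pow_left₀ (abs_nonneg _) (abs_sub_right_of_mem_uIcc ht') q)
      (hM t ht') (abs_nonneg _) (by positivity)
  have hintegral := intervalIntegral.norm_integral_le_of_norm_le_const hintegrand
  rw [Real.norm_eq_abs] at hintegral
  rw [taylorR, abs_mul, abs_of_pos (by positivity), one_div_mul_eq_div,
    div_le_div_iff_of_pos_right (by positivity)]
  calc _ ≤ |x₂ - x₁| ^ q * M * |x₂ - x₁| := hintegral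
    _ = M * |x₂ - x₁| ^ (q + 1) := by ring

theorem abs_taylorR_le_of_mem_Icc {q : ℕ} {x h y M : ℝ} {f : ℝ → ℝ}
    (hM : ∀ t ∈ Icc (x - h) (x + h), |iteratedDeriv (q + 1) f t| ≤ M)
    (hy : y ∈ Icc (x - h) (x + h)) :
    |taylorR q x y f| ≤ M * h ^ (q + 1) / q.factorial := by
  obtain ⟨hy₁, hy₂⟩ := hy
  have hsub : uIcc x y ⊆ Icc (x - h) (x + h) :=
    uIcc_subset_Icc ⟨by linarith, by linarith⟩ ⟨hy₁, hy₂⟩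
  have hM₀ : 0 ≤ M := (abs_nonneg _).trans (hM x (hsub left_mem_uIcc))
  refine (abs_taylorR_le fun t ht => hM t (hsub ht)).trans ?_
  gcongr
  exact abs_sub_le_iff.mpr ⟨by linarith, by linarith⟩

theorem exp_layer_le_of_le_add {b d x t : ℝ} (hb : 0 ≤ b) (hd : 0 < d) (ht : t ≤ x + d) :
    exp (-(b / d) * (1 - t)) ≤ exp b * exp (-(b / d) * (1 - x)) := by
  rw [← exp_add, exp_le_exp]
  have : b / d * (t - x) ≤ b / d * d := mul_le_mul_of_nonneg_left (by linarith) (by positivity)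
  rw [div_mul_cancel₀ b hd.ne'] at this
  linarith

theorem abs_le_of_layer_bound_near {g : ℝ → ℝ} {k : ℕ} {b c d h x : ℝ}
    (hb : 0 ≤ b) (hc : 0 ≤ c) (hd : 0 < d) (hhd : h ≤ d) (hx : x ∈ Icc h (1 - h))
    (hg : ∀ t ∈ Icc (0 : ℝ) 1, |g t| ≤ c * (1 + d⁻¹ ^ k * exp (-(b / d) * (1 - t)))) :
    ∀ t ∈ Icc (x - h) (x + h), |g t| ≤ c * (1 + d⁻¹ ^ k * (exp b * exp (-(b / d) * (1 - x)))) := by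
  rintro t ⟨ht₁, ht₂⟩
  refine (hg t ⟨by linarith [hx.1], by linarith [hx.2]⟩).trans ?_
  gcongr
  exact exp_layer_le_of_le_add hb hd (by linarith)

theorem mul_layer_bound_le {c d K E : ℝ} (hc : 0 ≤ c) (hd : 0 < d) (hd1 : d ≤ 1) (hK : 1 ≤ K) :
    d * (c * (1 + d⁻¹ ^ 3 * (K * E))) ≤ c * K * (1 + d⁻¹ ^ 2 * E) := by
  have hd3 : d * d⁻¹ ^ 3 = d⁻¹ ^ 2 := by field_simp
  calc d * (c * (1 + d⁻¹ ^ 3 * (K * E))) = c * (d + d * d⁻¹ ^ 3 * (K * E)) := by ring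
    _ ≤ c * (K + d⁻¹ ^ 2 * (K * E)) := by rw [hd3]; gcongr; exact hd1.trans hK
    _ = c * K * (1 + d⁻¹ ^ 2 * E) := by ring

/-- remainder estimate in the fine-mesh regime `h ≤ d`:
if `|z⁽⁴⁾(t)| ≤ c₂ (1 + d⁻³ exp(−b d⁻¹ (1−t)))` on `[0,1]`, then
`d h⁻² B(−P) |R₃(x, x−h; z)| + d h⁻² B(P) |R₃(x, x+h; z)|
   ≤ C h² (1 + d⁻² exp(−b d⁻¹ (1−x)))` with `C = C(b, c₂)`. -/
theorem remainder_estimate_fine_mesh (b c₂ : ℝ) (hb : 0 < b) (hc₂ : 0 < c₂) :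
    ∃ C > (0 : ℝ), ∀ d ∈ Set.Ioc (0 : ℝ) 1, ∀ h : ℝ, 0 < h → h ≤ d →
      ∀ x ∈ Set.Icc h (1 - h), ∀ z : ℝ → ℝ, ContDiff ℝ 4 z →
        (∀ t ∈ Set.Icc (0 : ℝ) 1,
          |iteratedDeriv 4 z t| ≤ c₂ * (1 + d⁻¹ ^ 3 * Real.exp (-(b / d) * (1 - t)))) →
        d / h ^ 2 * Bern (-(b * h / d)) * |taylorR 3 x (x - h) z|
          + d / h ^ 2 * Bern (b * h / d) * |taylorR 3 x (x + h) z|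
          ≤ C * h ^ 2 * (1 + d⁻¹ ^ 2 * Real.exp (-(b / d) * (1 - x))) := by
  refine ⟨(2 + b) * c₂ * exp b / 6, by positivity, ?_⟩
  rintro d ⟨hd, hd1⟩ h hh hhd x hx z - hz4
  set P := b * h / d
  set E := exp (-(b / d) * (1 - x))
  set M := c₂ * (1 + d⁻¹ ^ 3 * (exp b * E))
  have hM : ∀ t ∈ Icc (x - h) (x + h), |iteratedDeriv (3 + 1) z t| ≤ M :=
    abs_le_of_layer_bound_near hb.le hc₂.le hd hhd hx hz4
  have hR : ∀ y ∈ Icc (x - h) (x + h), |taylorR 3 x y z| ≤ M * h ^ 4 / 6 := fun y hy =>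
    (abs_taylorR_le_of_mem_Icc hM hy).trans_eq (by norm_num [Nat.factorial])
  have hP : P ≤ b := by rw [div_le_iff₀ hd]; nlinarith
  calc _ = d / h ^ 2 * (Bern (-P) * |taylorR 3 x (x - h) z|
          + Bern P * |taylorR 3 x (x + h) z|) := by ring
    _ ≤ d / h ^ 2 * ((P + 2) * (M * h ^ 4 / 6)) := by
        gcongr
        exact Bern_neg_mul_add_Bern_mul_le (by positivity)
          (hR _ ⟨le_rfl, by linarith⟩) (hR _ ⟨by linarith, le_rfl⟩)
    _ = (P + 2) * h ^ 2 * (d * M) / 6 := by field_simp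
    _ ≤ (b + 2) * h ^ 2 * (d * M) / 6 := by gcongr
    _ ≤ (b + 2) * h ^ 2 * (c₂ * exp b * (1 + d⁻¹ ^ 2 * E)) / 6 := by
        gcongr ?_ * _ * ?_ / _
        exact mul_layer_bound_le hc₂.le hd hd1 (one_le_exp hb.le)
    _ = _ := by ring
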